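/- Spectral gap comparison of 3AP counts: let A ⊆ ℤ/Nℤ (N odd) with density δ, let β = (1/|B|)·1_B for a set B ⊆ ℤ/Nℤ, and let f = β * 1_A. Suppose that for all r in a set Γ ⊆ ℤ/Nℤ with Γ ⊇ Δ_{θ} (the θ-spectrum of A) one has |β̂(r) − 1| ≤ η and |β̂(−2r) − 1| ≤ η. Then |T(1_A) − T(f)| ≤ (1/N)·(3η + 3η²+η³)·∑_{r∈Γ}|Â(r)|³ + (2/N)·∑_{r∉Γ}|Â(r)|³, where T(g) = ∑_{x+y=2z} g(x)g(y)g(2z). -/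

import Mathlib

open Finset

/-- The Fourier coefficient `ĝ(r) = ∑_x g(x) e^{-2πixr/N}` of `g : ℤ/Nℤ → ℝ`. -/
noncomputable def ftransf {N : ℕ} [NeZero N] (g : ZMod N → ℝ) (r : ZMod N) : ℂ :=
  ∑ x : ZMod N, (g x : ℂ) * Complex.exp (-(2 * Real.pi * Complex.I * ((x * r).val : ℕ) / N))

/-- The weighted count of three-term progressions `T(g) = ∑_{x+y=2z} g(x) g(y) g(2z)`. -/
noncomputable def tripleCount {N : ℕ} [NeZero N] (g : ZMod N → ℝ) : ℝ :=
  ∑ x : ZMod N, ∑ z : ZMod N, g x * g (2 * z - x) * g (2 * z)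

/-- Indicator function of a finite subset of `ℤ/Nℤ`. -/
noncomputable def ind {N : ℕ} (S : Finset (ZMod N)) : ZMod N → ℝ :=
  fun x => if x ∈ S then 1 else 0

/-!
For odd `N` the map `z ↦ 2z` is a bijection, so `T(g) = ∑_w (g * g)(w) g(w)`, and the convolution
theorem and Parseval give `N T(g) = ∑_r ĝ(r)² conj ĝ(r)`. Since `f̂ = β̂ Â`, the `r`-th term of
`N (T(1_A) - T(f))` is `|Â(r)|³` times `1 - β̂(r)² conj β̂(r)`. Writing this product of three
factors, each within `η` of `1`, as a telescoping sum bounds it by `(1 + η)³ - 1` on `Γ`; off `Γ`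
it is at most `2` because `|β̂| ≤ 1`.
-/

open ComplexConjugate ZMod

lemma norm_mul_mul_sub_one_le {R : Type*} [NormedRing R] [NormOneClass R] {u v w : R} {η : ℝ}
    (hu : ‖u - 1‖ ≤ η) (hv : ‖v - 1‖ ≤ η) (hw : ‖w - 1‖ ≤ η) :
    ‖u * v * w - 1‖ ≤ 3 * η + 3 * η ^ 2 + η ^ 3 := by
  have hη : 0 ≤ η := (norm_nonneg _).trans hu
  have hnorm {x : R} (hx : ‖x - 1‖ ≤ η) : ‖x‖ ≤ 1 + η :=
    (norm_le_norm_add_norm_sub' x 1).trans (by rw [norm_one]; linarith)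
  calc ‖u * v * w - 1‖ = ‖(u - 1) * v * w + (v - 1) * w + (w - 1)‖ := by noncomm_ring
    _ ≤ ‖u - 1‖ * ‖v‖ * ‖w‖ + ‖v - 1‖ * ‖w‖ + ‖w - 1‖ := by
      refine (norm_add₃_le ..).trans (add_le_add_three ?_ (norm_mul_le _ _) le_rfl)
      exact (norm_mul_le _ _).trans (by gcongr; exact norm_mul_le _ _)
    _ ≤ η * (1 + η) * (1 + η) + η * (1 + η) + η := by
      gcongr
      exacts [hnorm hv, hnorm hw, hnorm hw]
    _ = 3 * η + 3 * η ^ 2 + η ^ 3 := by ring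

lemma norm_mul_mul_sub_one_le_two {R : Type*} [NormedRing R] [NormOneClass R] {u v w : R}
    (hu : ‖u‖ ≤ 1) (hv : ‖v‖ ≤ 1) (hw : ‖w‖ ≤ 1) : ‖u * v * w - 1‖ ≤ 2 :=
  calc ‖u * v * w - 1‖ ≤ ‖u‖ * ‖v‖ * ‖w‖ + ‖(1 : R)‖ :=
        (norm_sub_le _ _).trans (by gcongr; exact norm_mul₃_le ..)
    _ ≤ 1 * 1 * 1 + 1 := by rw [norm_one]; gcongr
    _ = 2 := by norm_num

lemma isUnit_two_of_odd {N : ℕ} (hN : Odd N) : IsUnit (2 : ZMod N) := by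
  simpa using (ZMod.isUnit_iff_coprime 2 N).mpr (Nat.coprime_two_left.mpr hN)

variable {N : ℕ} [NeZero N]

lemma stdAddChar_neg_eq_exp (a : ZMod N) :
    stdAddChar (-a) = Complex.exp (-(2 * Real.pi * Complex.I * (a.val : ℕ) / N)) := by
  have h := stdAddChar_coe (N := N) (a.val : ℤ)
  push_cast [ZMod.natCast_zmod_val] at h
  rw [AddChar.map_neg_eq_inv, Complex.exp_neg, h]

lemma norm_stdAddChar (a : ZMod N) : ‖stdAddChar a‖ = 1 := by
  rw [stdAddChar_apply, Circle.norm_coe]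

lemma conj_stdAddChar (a : ZMod N) : conj (stdAddChar a) = stdAddChar (-a) := by
  rw [AddChar.map_neg_eq_inv, Complex.inv_eq_conj (norm_stdAddChar a)]

lemma ftransf_eq_dft (g : ZMod N → ℝ) : ftransf g = 𝓕 (fun x => (g x : ℂ)) := by
  ext r
  simp only [ftransf, dft_apply, smul_eq_mul, stdAddChar_neg_eq_exp, mul_comm]

lemma ftransf_apply (g : ZMod N → ℝ) (r : ZMod N) :
    ftransf g r = ∑ x, stdAddChar (-(x * r)) * (g x : ℂ) := by
  rw [ftransf_eq_dft]; rfl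

lemma ftransf_neg (g : ZMod N → ℝ) (r : ZMod N) : ftransf g (-r) = conj (ftransf g r) := by
  simp only [ftransf_apply, map_sum, map_mul, Complex.conj_ofReal, conj_stdAddChar, mul_neg]

lemma norm_ftransf_le (g : ZMod N → ℝ) (r : ZMod N) : ‖ftransf g r‖ ≤ ∑ x, |g x| := by
  rw [ftransf_apply]
  refine (norm_sum_le _ _).trans_eq (sum_congr rfl fun x _ => ?_)
  rw [norm_mul, norm_stdAddChar, one_mul, Complex.norm_real, Real.norm_eq_abs]

lemma norm_ftransf_uniform_le_one (B : Finset (ZMod N)) (r : ZMod N) :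
    ‖ftransf (fun x => (B.card : ℝ)⁻¹ * ind B x) r‖ ≤ 1 := by
  refine (norm_ftransf_le _ r).trans ?_
  have hind (x : ZMod N) : 0 ≤ ind B x := by unfold ind; split_ifs <;> norm_num
  simp_rw [abs_mul, abs_inv, Nat.abs_cast, abs_of_nonneg (hind _), ← mul_sum]
  simp only [ind, sum_ite_mem, univ_inter, sum_const, nsmul_eq_mul, mul_one]
  exact inv_mul_le_one_of_le₀ le_rfl (Nat.cast_nonneg _)

noncomputable def addConv (g h : ZMod N → ℝ) (x : ZMod N) : ℝ :=
  ∑ y, g y * h (x - y)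

lemma ftransf_addConv (g h : ZMod N → ℝ) (r : ZMod N) :
    ftransf (addConv g h) r = ftransf g r * ftransf h r := by
  simp only [ftransf_apply, addConv, sum_mul_sum]
  push_cast
  simp only [mul_sum]
  rw [sum_comm]
  refine sum_congr rfl fun y _ => Fintype.sum_equiv (Equiv.subRight y) _ _ fun x => ?_
  have hψ : stdAddChar (-(x * r)) = stdAddChar (-(y * r)) * stdAddChar (-((x - y) * r)) := by
    rw [← AddChar.map_add_eq_mul]; ring_nf
  rw [Equiv.subRight_apply, hψ]
  ring

lemma sum_ftransf_mul_ftransf_neg (u v : ZMod N → ℝ) :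
    ∑ r, ftransf u r * ftransf v (-r) = N * ∑ x, ((u x * v x : ℝ) : ℂ) := by
  calc ∑ r, ftransf u r * ftransf v (-r)
      = ∑ x, (∑ r, stdAddChar (-(r * -x)) • ftransf u r) * v x := by
        simp only [ftransf_apply v, mul_sum, sum_mul, smul_eq_mul]
        rw [sum_comm]
        exact sum_congr rfl fun x _ => sum_congr rfl fun r _ => by ring_nf
    _ = ∑ x, (N : ℂ) * u x * v x := by
        refine sum_congr rfl fun x _ => ?_
        rw [ftransf_eq_dft, ← dft_apply, dft_dft]
        simp only [neg_neg, smul_eq_mul]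
    _ = N * ∑ x, ((u x * v x : ℝ) : ℂ) := by
        push_cast
        simp only [mul_sum, mul_assoc]

lemma tripleCount_eq_sum_addConv_mul (h2 : IsUnit (2 : ZMod N)) (g : ZMod N → ℝ) :
    tripleCount g = ∑ w, addConv g g w * g w := by
  have hdouble (x : ZMod N) :
      ∑ z, g x * g (2 * z - x) * g (2 * z) = ∑ w, g x * g (w - x) * g w :=
    Fintype.sum_bijective (2 * ·) (IsUnit.isUnit_iff_mulLeft_bijective.mp h2) _ _ fun _ => rfl
  simp only [tripleCount, hdouble, addConv, sum_mul]
  exact sum_comm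

lemma natCast_mul_tripleCount (h2 : IsUnit (2 : ZMod N)) (g : ZMod N → ℝ) :
    (N : ℂ) * tripleCount g = ∑ r, ftransf g r ^ 2 * ftransf g (-r) := by
  simp only [tripleCount_eq_sum_addConv_mul h2, sq, ← ftransf_addConv,
    sum_ftransf_mul_ftransf_neg, Complex.ofReal_sum]

lemma natCast_mul_tripleCount_sub_tripleCount_addConv (h2 : IsUnit (2 : ZMod N))
    (β g : ZMod N → ℝ) :
    (N : ℂ) * ↑(tripleCount g - tripleCount (addConv β g)) =
      ∑ r, ftransf g r ^ 2 * conj (ftransf g r) *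
        (1 - ftransf β r * ftransf β r * conj (ftransf β r)) := by
  rw [Complex.ofReal_sub, mul_sub, natCast_mul_tripleCount h2, natCast_mul_tripleCount h2,
    ← sum_sub_distrib]
  refine sum_congr rfl fun r _ => ?_
  simp only [ftransf_addConv, ftransf_neg, map_mul]
  ring

lemma abs_tripleCount_sub_tripleCount_addConv_le (h2 : IsUnit (2 : ZMod N))
    (β g : ZMod N → ℝ) :
    |tripleCount g - tripleCount (addConv β g)| ≤
      (N : ℝ)⁻¹ * ∑ r, ‖ftransf g r‖ ^ 3 *
        ‖ftransf β r * ftransf β r * conj (ftransf β r) - 1‖ := by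
  have h := congrArg norm (natCast_mul_tripleCount_sub_tripleCount_addConv h2 β g)
  rw [norm_mul, Complex.norm_natCast, Complex.norm_real, Real.norm_eq_abs] at h
  rw [le_inv_mul_iff₀ (by exact_mod_cast NeZero.pos N), h]
  refine (norm_sum_le _ _).trans_eq (sum_congr rfl fun r _ => ?_)
  rw [norm_mul, norm_mul, norm_pow, Complex.norm_conj, norm_sub_rev]
  ring

theorem stmt19_general {N : ℕ} [NeZero N] (hN : Odd N) (A B : Finset (ZMod N))
    (Γ : Finset (ZMod N)) (η : ℝ)
    (hβ : ∀ r ∈ Γ,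
      ‖ftransf (fun x => ((B.card : ℝ))⁻¹ * ind B x) r - 1‖ ≤ η ∧
      ‖ftransf (fun x => ((B.card : ℝ))⁻¹ * ind B x) (-2 * r) - 1‖ ≤ η) :
    |tripleCount (ind A) -
        tripleCount (fun x => ∑ y : ZMod N, ((B.card : ℝ))⁻¹ * ind B y * ind A (x - y))| ≤
      (1 / N) * (3 * η + 3 * η ^ 2 + η ^ 3) * (∑ r ∈ Γ, ‖ftransf (ind A) r‖ ^ 3) +
        (2 / N) * ∑ r ∈ Γᶜ, ‖ftransf (ind A) r‖ ^ 3 := by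
  set β : ZMod N → ℝ := fun x => ((B.card : ℝ))⁻¹ * ind B x
  set err : ZMod N → ℝ := fun r => ‖ftransf β r * ftransf β r * conj (ftransf β r) - 1‖
  have herr_of_mem (r : ZMod N) (hr : r ∈ Γ) : err r ≤ 3 * η + 3 * η ^ 2 + η ^ 3 := by
    have h := (hβ r hr).1
    refine norm_mul_mul_sub_one_le h h ?_
    rwa [← map_one conj, ← map_sub, Complex.norm_conj]
  have herr_le_two (r : ZMod N) : err r ≤ 2 :=
    have h := norm_ftransf_uniform_le_one B r
    norm_mul_mul_sub_one_le_two h h (by rwa [Complex.norm_conj])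
  calc _ ≤ (N : ℝ)⁻¹ * ∑ r, ‖ftransf (ind A) r‖ ^ 3 * err r :=
        abs_tripleCount_sub_tripleCount_addConv_le (isUnit_two_of_odd hN) β (ind A)
    _ = (N : ℝ)⁻¹ * (∑ r ∈ Γ, ‖ftransf (ind A) r‖ ^ 3 * err r +
          ∑ r ∈ Γᶜ, ‖ftransf (ind A) r‖ ^ 3 * err r) := by rw [sum_add_sum_compl]
    _ ≤ (N : ℝ)⁻¹ * (∑ r ∈ Γ, ‖ftransf (ind A) r‖ ^ 3 * (3 * η + 3 * η ^ 2 + η ^ 3) +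
          ∑ r ∈ Γᶜ, ‖ftransf (ind A) r‖ ^ 3 * 2) := by
        gcongr with r hr r
        exacts [herr_of_mem r hr, herr_le_two r]
    _ = _ := by rw [← sum_mul, ← sum_mul]; ring

theorem stmt19 {N : ℕ} [NeZero N] (hN : Odd N) (A B : Finset (ZMod N))
    (Γ : Finset (ZMod N)) (θ η : ℝ)
    (hΓ : ∀ r : ZMod N, θ * A.card ≤ ‖ftransf (ind A) r‖ → r ∈ Γ)
    (hβ : ∀ r ∈ Γ,
      ‖ftransf (fun x => ((B.card : ℝ))⁻¹ * ind B x) r - 1‖ ≤ η ∧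
      ‖ftransf (fun x => ((B.card : ℝ))⁻¹ * ind B x) (-2 * r) - 1‖ ≤ η) :
    |tripleCount (ind A) -
        tripleCount (fun x => ∑ y : ZMod N, ((B.card : ℝ))⁻¹ * ind B y * ind A (x - y))| ≤
      (1 / N) * (3 * η + 3 * η ^ 2 + η ^ 3) * (∑ r ∈ Γ, ‖ftransf (ind A) r‖ ^ 3) +
        (2 / N) * ∑ r ∈ Γᶜ, ‖ftransf (ind A) r‖ ^ 3 :=
  stmt19_general hN A B Γ η hβ
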